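/- A finite simple graph G is a König-Egerváry graph if and only if there exist maximum independent sets S₁, S₂ of G such that there is a matching from V(G) − (S₁ ∪ S₂) into S₁ ∩ S₂ (equivalently, such a matching exists for every pair of maximum independent sets). -/

import Mathlib

open Set

variable {V : Type*}

/-- `S` is an independent set of `G`. -/
def IndepSet (G : SimpleGraph V) (S : Set V) : Prop :=
  ∀ x ∈ S, ∀ y ∈ S, ¬ G.Adj x y

/-- The independence number `α(G)`. -/
noncomputable def alpha (G : SimpleGraph V) : ℕ :=
  sSup {n | ∃ S : Set V, IndepSet G S ∧ S.ncard = n}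

/-- `S` is a maximum independent set of `G`. -/
def MaxIndep (G : SimpleGraph V) (S : Set V) : Prop :=
  IndepSet G S ∧ S.ncard = alpha G

/-- `Ω(G)`, the family of all maximum independent sets. -/
def Omega (G : SimpleGraph V) : Set (Set V) := {S | MaxIndep G S}

/-- `core(G)`, the intersection of all maximum independent sets. -/
def core (G : SimpleGraph V) : Set V := ⋂₀ Omega G

/-- `corona(G)`, the union of all maximum independent sets. -/
def corona (G : SimpleGraph V) : Set V := ⋃₀ Omega G

/-- The matching number `μ(G)`. -/
noncomputable def matchNum (G : SimpleGraph V) : ℕ :=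
  sSup {n | ∃ M : G.Subgraph, M.IsMatching ∧ M.edgeSet.ncard = n}

/-- A matching from `X` into `Y`: an injection `f` on `X` into `Y` such that each `x ∈ X`
is adjacent to `f x` and the edges `{x, f x}` are pairwise disjoint. -/
def MatchingFrom (G : SimpleGraph V) (X Y : Set V) : Prop :=
  ∃ f : V → V, Set.InjOn f X ∧ (∀ x ∈ X, f x ∈ Y ∧ G.Adj x (f x)) ∧
    ∀ x ∈ X, ∀ y ∈ X, x ≠ y → f x ≠ y

/-!
An edge of a matching has at most one endpoint in an independent set, so choosing for every
edge an endpoint outside a maximum independent set `S` gives `μ ≤ n - α`. Equality means that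
this choice is a bijection onto the complement of `S`: every vertex outside `S` is matched into
`S`. A vertex outside `S₁ ∪ S₂` is then matched into both, hence into `S₁ ∩ S₂`.

Conversely, if `S₁` is a maximum independent set and `S₂` is independent, Hall's condition
holds for `S₂ \ S₁` against its neighbours in `S₁` (otherwise exchanging a violating set for
its neighbourhood would enlarge `S₁`). This matches `S₂ \ S₁` into `S₁ \ S₂`; together with a
matching of `V - (S₁ ∪ S₂)` into `S₁ ∩ S₂` it matches all of `V - S₁` into `S₁`, so `μ ≥ n - α`.
-/

open SimpleGraph

namespace SimpleGraph.Subgraph.IsMatching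

variable {G : SimpleGraph V} {M : G.Subgraph}

lemma eq_of_mem_edgeSet (hM : M.IsMatching) {e e' : Sym2 V} (he : e ∈ M.edgeSet)
    (he' : e' ∈ M.edgeSet) {v : V} (hv : v ∈ e) (hv' : v ∈ e') : e = e' := by
  obtain ⟨w, rfl⟩ := Sym2.mem_iff_exists.1 hv
  obtain ⟨w', rfl⟩ := Sym2.mem_iff_exists.1 hv'
  obtain rfl := hM.eq_of_adj_left he he'
  rfl

lemma exists_injOn_edgeSet_notMem (hM : M.IsMatching) {S : Set V} (hS : IndepSet G S) :
    ∃ f : Sym2 V → V, InjOn f M.edgeSet ∧ ∀ e ∈ M.edgeSet, f e ∈ e ∧ f e ∉ S := by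
  have hout : ∀ e : Sym2 V, ∃ v ∈ e, e ∈ M.edgeSet → v ∉ S := by
    intro e
    induction e with
    | _ a b =>
      by_cases ha : a ∈ S
      · exact ⟨b, Sym2.mem_mk_right a b, fun he hb => hS a ha b hb (M.adj_sub he)⟩
      · exact ⟨a, Sym2.mem_mk_left a b, fun _ => ha⟩
  choose f hfe hfS using hout
  exact ⟨f, fun e he e' he' hee => hM.eq_of_mem_edgeSet he he' (hfe e) (hee ▸ hfe e'),
    fun e he => ⟨hfe e, hfS e he⟩⟩

lemma ncard_edgeSet_add_ncard_le [Finite V] (hM : M.IsMatching) {S : Set V}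
    (hS : IndepSet G S) : M.edgeSet.ncard + S.ncard ≤ Nat.card V := by
  obtain ⟨f, hf, hfe⟩ := hM.exists_injOn_edgeSet_notMem hS
  have hle := ncard_le_ncard_of_injOn f (t := Sᶜ) (fun e he => (hfe e he).2) hf
  rw [ncard_compl] at hle
  have := ncard_le_card S
  omega

end SimpleGraph.Subgraph.IsMatching

section

variable {G : SimpleGraph V} {S A B T X Y X' Y' : Set V}

lemma matchingFrom_of_injOn {f : V → V} (hf : InjOn f X)
    (hfY : ∀ x ∈ X, f x ∈ Y ∧ G.Adj x (f x)) (hXY : Disjoint X Y) : MatchingFrom G X Y :=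
  ⟨f, hf, hfY, fun x hx _ hy _ hxy => hXY.ne_of_mem hy (hfY x hx).1 hxy.symm⟩

lemma MatchingFrom.union (h : MatchingFrom G X Y) (h' : MatchingFrom G X' Y')
    (hX : Disjoint X X') (hY : Disjoint Y Y') (hXY : Disjoint (X ∪ X') (Y ∪ Y')) :
    MatchingFrom G (X ∪ X') (Y ∪ Y') := by
  classical
  obtain ⟨f, hf, hfY, -⟩ := h
  obtain ⟨g, hg, hgY, -⟩ := h'
  have hF : EqOn f (X.piecewise f g) X := fun x hx => (piecewise_eq_of_mem _ _ _ hx).symm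
  have hG : EqOn g (X.piecewise f g) X' := fun x hx =>
    (piecewise_eq_of_notMem _ _ _ (hX.notMem_of_mem_right hx)).symm
  refine matchingFrom_of_injOn ((injOn_union hX).2 ⟨hf.congr hF, hg.congr hG, ?_⟩) ?_ hXY
  · intro x hx y hy
    rw [← hF hx, ← hG hy]
    exact hY.ne_of_mem (hfY x hx).1 (hgY y hy).1
  · rintro x (hx | hx)
    · rw [← hF hx]
      exact ⟨Or.inl (hfY x hx).1, (hfY x hx).2⟩
    · rw [← hG hx]
      exact ⟨Or.inr (hgY x hx).1, (hgY x hx).2⟩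

variable [Finite V]

lemma bddAbove_ncard_indepSet (G : SimpleGraph V) :
    BddAbove {n | ∃ S : Set V, IndepSet G S ∧ S.ncard = n} :=
  ⟨Nat.card V, by rintro _ ⟨S, -, rfl⟩; exact ncard_le_card S⟩

lemma IndepSet.ncard_le_alpha (hS : IndepSet G S) : S.ncard ≤ alpha G :=
  le_csSup (bddAbove_ncard_indepSet G) ⟨S, hS, rfl⟩

lemma exists_maxIndep (G : SimpleGraph V) : ∃ S, MaxIndep G S := by
  refine Nat.sSup_mem ?_ (bddAbove_ncard_indepSet G)
  exact ⟨0, ∅, fun _ h => h.elim, ncard_empty V⟩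

lemma bddAbove_ncard_isMatching (G : SimpleGraph V) :
    BddAbove {n | ∃ M : G.Subgraph, M.IsMatching ∧ M.edgeSet.ncard = n} :=
  ⟨Nat.card (Sym2 V), by rintro _ ⟨M, -, rfl⟩; exact ncard_le_card M.edgeSet⟩

lemma SimpleGraph.Subgraph.IsMatching.ncard_edgeSet_le_matchNum {M : G.Subgraph}
    (hM : M.IsMatching) : M.edgeSet.ncard ≤ matchNum G :=
  le_csSup (bddAbove_ncard_isMatching G) ⟨M, hM, rfl⟩

lemma exists_isMatching_ncard_edgeSet_eq_matchNum (G : SimpleGraph V) :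
    ∃ M : G.Subgraph, M.IsMatching ∧ M.edgeSet.ncard = matchNum G := by
  refine Nat.sSup_mem ?_ (bddAbove_ncard_isMatching G)
  exact ⟨0, ⊥, fun _ h => h.elim, by simp⟩

lemma alpha_add_matchNum_le (G : SimpleGraph V) : alpha G + matchNum G ≤ Nat.card V := by
  obtain ⟨S, hS, hSc⟩ := exists_maxIndep G
  obtain ⟨M, hM, hMc⟩ := exists_isMatching_ncard_edgeSet_eq_matchNum G
  rw [← hSc, ← hMc, add_comm]
  exact hM.ncard_edgeSet_add_ncard_le hS

lemma MatchingFrom.ncard_le_matchNum (h : MatchingFrom G X Y) :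
    X.ncard ≤ matchNum G := by
  obtain ⟨f, hf, hfY, hne⟩ := h
  set M : G.Subgraph := ⨆ x : X, G.subgraphOfAdj (hfY x x.2).2
  have hM : M.IsMatching := by
    refine .iSup (fun x => .subgraphOfAdj _) fun x y hxy => ?_
    have hxy' : (x : V) ≠ y := Subtype.coe_ne_coe.2 hxy
    simp only [(Subgraph.IsMatching.subgraphOfAdj _).support_eq_verts, subgraphOfAdj_verts,
      disjoint_insert_left, disjoint_singleton_left, mem_insert_iff, mem_singleton_iff, not_or]
    exact ⟨⟨hxy', (hne y y.2 x x.2 hxy'.symm).symm⟩,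
      hne x x.2 y y.2 hxy', fun h => hxy' (hf x.2 y.2 h)⟩
  have hE : ∀ x ∈ X, s(x, f x) ∈ M.edgeSet := fun x hx => by
    rw [Subgraph.edgeSet_iSup]
    exact mem_iUnion.2 ⟨⟨x, hx⟩, by simp [edgeSet_subgraphOfAdj]⟩
  have hinj : InjOn (fun x => s(x, f x)) X := by
    intro x hx y hy hxy
    rcases Sym2.eq_iff.1 hxy with ⟨rfl, -⟩ | ⟨-, hfxy⟩
    · rfl
    · by_contra hxy'
      exact hne x hx y hy hxy' hfxy
  exact (ncard_le_ncard_of_injOn _ hE hinj).trans hM.ncard_edgeSet_le_matchNum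

lemma ncard_le_ncard_neighbors_of_maxIndep (hA : MaxIndep G A) (hT : IndepSet G T)
    (hTA : Disjoint T A) : T.ncard ≤ {a ∈ A | ∃ t ∈ T, G.Adj t a}.ncard := by
  set N := {a ∈ A | ∃ t ∈ T, G.Adj t a}
  have hNA : N ⊆ A := sep_subset _ _
  have hindep : IndepSet G (A \ N ∪ T) := by
    rintro x (hx | hx) y (hy | hy) hxy
    · exact hA.1 x hx.1 y hy.1 hxy
    · exact hx.2 ⟨hx.1, y, hy, hxy.symm⟩
    · exact hy.2 ⟨hy.1, x, hx, hxy⟩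
    · exact hT x hx y hy hxy
  have hcard := hindep.ncard_le_alpha
  rw [ncard_union_eq (hTA.symm.mono_left sdiff_subset), ncard_sdiff hNA, ← hA.2] at hcard
  have := ncard_le_ncard hNA
  omega

lemma matchingFrom_sdiff (hA : MaxIndep G A) (hB : IndepSet G B) :
    MatchingFrom G (B \ A) (A \ B) := by
  classical
  have := Fintype.ofFinite V
  have hall : ∀ s : Finset ↥(B \ A),
      s.card ≤ (Finset.univ.filter fun y => ∃ x ∈ s, y ∈ A ∧ G.Adj x y).card := by
    intro s
    set T := Subtype.val '' (s : Set ↥(B \ A))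
    have hT : IndepSet G T := fun _ ⟨x, _, hx⟩ _ ⟨y, _, hy⟩ => hx ▸ hy ▸ hB x x.2.1 y y.2.1
    have hTA : Disjoint T A := Set.disjoint_left.2 fun _ ⟨x, _, hx⟩ => hx ▸ x.2.2
    have hN : {a ∈ A | ∃ t ∈ T, G.Adj t a} =
        ↑(Finset.univ.filter fun y => ∃ x ∈ s, y ∈ A ∧ G.Adj x y) := by
      ext y
      simp only [T, Finset.coe_filter, Finset.mem_univ, true_and, mem_ofPred_eq, mem_image,
        Finset.mem_coe]
      constructor
      · rintro ⟨hyA, _, ⟨x, hx, rfl⟩, hxy⟩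
        exact ⟨x, hx, hyA, hxy⟩
      · rintro ⟨x, hx, hyA, hxy⟩
        exact ⟨hyA, x, ⟨x, hx, rfl⟩, hxy⟩
    have hs := ncard_le_ncard_neighbors_of_maxIndep hA hT hTA
    rwa [hN, ncard_coe_finset, ncard_image_of_injective _ Subtype.val_injective,
      ncard_coe_finset] at hs
  obtain ⟨f, hf, hfA⟩ := (Fintype.all_card_le_filter_rel_iff_exists_injective _).1 hall
  refine matchingFrom_of_injOn (f := fun v => if h : v ∈ B \ A then f ⟨v, h⟩ else v)
    (fun x hx y hy hxy => ?_) (fun x hx => ?_) disjoint_sdiff_sdiff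
  · simp only [dif_pos hx, dif_pos hy] at hxy
    exact congrArg Subtype.val (hf hxy)
  · simp only [dif_pos hx]
    obtain ⟨hA', hadj⟩ := hfA ⟨x, hx⟩
    exact ⟨⟨hA', fun hB' => hB x hx.1 _ hB' hadj⟩, hadj⟩

lemma exists_adj_mem_of_alpha_add_matchNum_eq (hKE : alpha G + matchNum G = Nat.card V)
    (hS : MaxIndep G S) {M : G.Subgraph} (hM : M.IsMatching) (hMc : M.edgeSet.ncard = matchNum G)
    {v : V} (hv : v ∉ S) : ∃ w ∈ S, M.Adj v w := by
  obtain ⟨f, hf, hfe⟩ := hM.exists_injOn_edgeSet_notMem hS.1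
  have himg : f '' M.edgeSet = Sᶜ := by
    refine eq_of_subset_of_ncard_le (image_subset_iff.2 fun e he => (hfe e he).2) ?_
    rw [hf.ncard_image, hMc, ncard_compl, hS.2]
    omega
  have hsurj : ∀ u ∉ S, ∃ e ∈ M.edgeSet, f e = u := fun u hu => by
    rwa [← mem_compl_iff, ← himg] at hu
  obtain ⟨e, he, hev⟩ := hsurj v hv
  obtain ⟨w, rfl⟩ := Sym2.mem_iff_exists.1 (hev ▸ (hfe e he).1)
  refine ⟨w, by_contra fun hw => ?_, he⟩
  obtain ⟨e', he', hew⟩ := hsurj w hw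
  obtain rfl := hM.eq_of_mem_edgeSet he' he (hew ▸ (hfe e' he').1) (Sym2.mem_mk_right v w)
  exact (M.adj_sub he).ne (hev.symm.trans hew)

lemma matchingFrom_of_alpha_add_matchNum_eq (hKE : alpha G + matchNum G = Nat.card V)
    {S₁ S₂ : Set V} (h₁ : MaxIndep G S₁) (h₂ : MaxIndep G S₂) :
    MatchingFrom G (univ \ (S₁ ∪ S₂)) (S₁ ∩ S₂) := by
  obtain ⟨M, hM, hMc⟩ := exists_isMatching_ncard_edgeSet_eq_matchNum G
  have hout : ∀ v ∈ univ \ (S₁ ∪ S₂), ∃ w, M.Adj v w ∧ w ∈ S₁ ∩ S₂ := by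
    rintro v ⟨-, hv⟩
    rw [mem_union, not_or] at hv
    obtain ⟨w₁, hw₁, hvw₁⟩ := exists_adj_mem_of_alpha_add_matchNum_eq hKE h₁ hM hMc hv.1
    obtain ⟨w₂, hw₂, hvw₂⟩ := exists_adj_mem_of_alpha_add_matchNum_eq hKE h₂ hM hMc hv.2
    exact ⟨w₁, hvw₁, hw₁, hM.eq_of_adj_left hvw₂ hvw₁ ▸ hw₂⟩
  choose! p hp using hout
  exact matchingFrom_of_injOn (f := p)
    (fun x hx y hy hxy => hM.eq_of_adj_right (hp x hx).1 (hxy ▸ (hp y hy).1))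
    (fun x hx => ⟨(hp x hx).2, M.adj_sub (hp x hx).1⟩)
    (disjoint_sdiff_left.mono_right (inter_subset_left.trans subset_union_left))

lemma alpha_add_matchNum_eq_of_matchingFrom {S₁ S₂ : Set V} (h₁ : MaxIndep G S₁)
    (h₂ : IndepSet G S₂) (hm : MatchingFrom G (univ \ (S₁ ∪ S₂)) (S₁ ∩ S₂)) :
    alpha G + matchNum G = Nat.card V := by
  have hX : univ \ (S₁ ∪ S₂) ∪ S₂ \ S₁ = S₁ᶜ := by
    ext x
    simp only [mem_union, mem_sdiff, mem_univ, mem_compl_iff]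
    tauto
  have hY : S₁ ∩ S₂ ∪ S₁ \ S₂ = S₁ := inter_union_sdiff S₁ S₂
  have hcompl := hm.union (matchingFrom_sdiff h₁ h₂)
    (disjoint_sdiff_left.mono_right (sdiff_subset.trans subset_union_right))
    disjoint_sdiff_inter.symm (by rw [hX, hY]; exact disjoint_compl_left)
  rw [hX, hY] at hcompl
  have hle := hcompl.ncard_le_matchNum
  rw [ncard_compl, h₁.2] at hle
  have := alpha_add_matchNum_le G
  have := h₁.2 ▸ ncard_le_card S₁
  omega

end

theorem stmt_19 [Fintype V] (G : SimpleGraph V) :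
    (alpha G + matchNum G = Fintype.card V ↔
      ∀ S₁ ∈ Omega G, ∀ S₂ ∈ Omega G,
        MatchingFrom G (Set.univ \ (S₁ ∪ S₂)) (S₁ ∩ S₂)) ∧
    (alpha G + matchNum G = Fintype.card V ↔
      ∃ S₁ ∈ Omega G, ∃ S₂ ∈ Omega G,
        MatchingFrom G (Set.univ \ (S₁ ∪ S₂)) (S₁ ∩ S₂)) := by
  rw [← Nat.card_eq_fintype_card]
  obtain ⟨S, hS⟩ := exists_maxIndep G
  exact ⟨⟨fun h S₁ h₁ S₂ h₂ => matchingFrom_of_alpha_add_matchNum_eq h h₁ h₂,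
      fun h => alpha_add_matchNum_eq_of_matchingFrom hS hS.1 (h S hS S hS)⟩,
    ⟨fun h => ⟨S, hS, S, hS, matchingFrom_of_alpha_add_matchNum_eq h hS hS⟩,
      fun ⟨S₁, h₁, S₂, h₂, hm⟩ => alpha_add_matchNum_eq_of_matchingFrom h₁ h₂.1 hm⟩⟩
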